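/- Let A > 0 and B, C, D ≥ 0 with B + C + D > 0, and let 1 < p < q be real. Define f(t) = A t² − B t^{2p} − C t^{2q} − D t^{p+q} for t ≥ 0. Then f has a unique critical point t₀ in (0, ∞); moreover f is strictly increasing on (0, t₀), strictly decreasing on (t₀, ∞), and f attains its maximum over (0,∞) at t₀. -/
import Mathlib

open Real Set Filter

lemma aux_cont4 (e : ℝ) (he : 0 < e) : Continuous fun t : ℝ => t ^ e := by
  rw [continuous_iff_continuousAt]
  intro x
  exact Real.continuousAt_rpow_const x e (Or.inr he.le)

lemma aux_exists4 (c e M : ℝ) (hc : 0 < c) (he : 0 < e) :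
    ∃ T : ℝ, 0 ≤ T ∧ M ≤ c * T ^ e := by
  have h := (tendsto_rpow_atTop he).const_mul_atTop hc
  obtain ⟨T, hT⟩ := ((h.eventually_ge_atTop M).and (eventually_ge_atTop 0)).exists
  exact ⟨T, hT.2, hT.1⟩

theorem stmt_4 (A B C D p q : ℝ) (hA : 0 < A) (hB : 0 ≤ B) (hC : 0 ≤ C) (hD : 0 ≤ D)
    (hBCD : 0 < B + C + D) (hp : 1 < p) (hpq : p < q) :
    ∃ t₀ : ℝ, 0 < t₀ ∧
      deriv (fun t : ℝ => A * t ^ 2 - B * t ^ (2 * p) - C * t ^ (2 * q) - D * t ^ (p + q)) t₀ = 0 ∧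
      (∀ t : ℝ, 0 < t →
        deriv (fun t : ℝ => A * t ^ 2 - B * t ^ (2 * p) - C * t ^ (2 * q) - D * t ^ (p + q)) t = 0 →
        t = t₀) ∧
      StrictMonoOn (fun t : ℝ => A * t ^ 2 - B * t ^ (2 * p) - C * t ^ (2 * q) - D * t ^ (p + q))
        (Set.Ioc 0 t₀) ∧
      StrictAntiOn (fun t : ℝ => A * t ^ 2 - B * t ^ (2 * p) - C * t ^ (2 * q) - D * t ^ (p + q))
        (Set.Ici t₀) ∧
      (∀ t : ℝ, 0 < t →
        A * t ^ 2 - B * t ^ (2 * p) - C * t ^ (2 * q) - D * t ^ (p + q) ≤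
        A * t₀ ^ 2 - B * t₀ ^ (2 * p) - C * t₀ ^ (2 * q) - D * t₀ ^ (p + q)) := by
  set f : ℝ → ℝ := fun t => A * t ^ 2 - B * t ^ (2 * p) - C * t ^ (2 * q) - D * t ^ (p + q)
    with hfdef
  set g : ℝ → ℝ := fun t =>
      2 * p * B * t ^ (2 * p - 2) + 2 * q * C * t ^ (2 * q - 2) + (p + q) * D * t ^ (p + q - 2)
    with hgdef
  have he1 : 0 < 2 * p - 2 := by linarith
  have he2 : 0 < 2 * q - 2 := by linarith
  have he3 : 0 < p + q - 2 := by linarith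
  have hc1 : 0 ≤ 2 * p * B := by nlinarith
  have hc2 : 0 ≤ 2 * q * C := by nlinarith
  have hc3 : 0 ≤ (p + q) * D := by nlinarith
  have hcase : 0 < B ∨ 0 < C ∨ 0 < D := by
    by_contra h
    push_neg at h
    linarith [h.1, h.2.1, h.2.2]
  -- g is strictly monotone on [0, ∞)
  have hgmono : StrictMonoOn g (Ici 0) := by
    intro s hs t ht hst
    simp only [hgdef]
    have hs0 : (0:ℝ) ≤ s := hs
    have l1 : s ^ (2 * p - 2) ≤ t ^ (2 * p - 2) := Real.rpow_le_rpow hs0 hst.le he1.le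
    have l2 : s ^ (2 * q - 2) ≤ t ^ (2 * q - 2) := Real.rpow_le_rpow hs0 hst.le he2.le
    have l3 : s ^ (p + q - 2) ≤ t ^ (p + q - 2) := Real.rpow_le_rpow hs0 hst.le he3.le
    have m1 : 2 * p * B * s ^ (2 * p - 2) ≤ 2 * p * B * t ^ (2 * p - 2) :=
      mul_le_mul_of_nonneg_left l1 hc1
    have m2 : 2 * q * C * s ^ (2 * q - 2) ≤ 2 * q * C * t ^ (2 * q - 2) :=
      mul_le_mul_of_nonneg_left l2 hc2
    have m3 : (p + q) * D * s ^ (p + q - 2) ≤ (p + q) * D * t ^ (p + q - 2) :=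
      mul_le_mul_of_nonneg_left l3 hc3
    rcases hcase with h | h | h
    · have hcpos : 0 < 2 * p * B := by nlinarith
      have := mul_lt_mul_of_pos_left (Real.rpow_lt_rpow hs0 hst he1) hcpos
      linarith
    · have hcpos : 0 < 2 * q * C := by nlinarith
      have := mul_lt_mul_of_pos_left (Real.rpow_lt_rpow hs0 hst he2) hcpos
      linarith
    · have hcpos : 0 < (p + q) * D := by nlinarith
      have := mul_lt_mul_of_pos_left (Real.rpow_lt_rpow hs0 hst he3) hcpos
      linarith
  have hgcont : Continuous g := by
    rw [hgdef]
    exact ((continuous_const.mul (aux_cont4 _ he1)).add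
      (continuous_const.mul (aux_cont4 _ he2))).add (continuous_const.mul (aux_cont4 _ he3))
  have hg0 : g 0 = 0 := by
    simp only [hgdef]
    rw [Real.zero_rpow he1.ne', Real.zero_rpow he2.ne', Real.zero_rpow he3.ne']
    ring
  -- find T with g T ≥ 2A
  have hT : ∃ T : ℝ, 0 ≤ T ∧ 2 * A ≤ g T := by
    rcases hcase with h | h | h
    · obtain ⟨T, hT0, hTge⟩ := aux_exists4 (2 * p * B) _ (2 * A) (by nlinarith) he1
      refine ⟨T, hT0, ?_⟩
      have n2 : 0 ≤ 2 * q * C * T ^ (2 * q - 2) := mul_nonneg hc2 (Real.rpow_nonneg hT0 _)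
      have n3 : 0 ≤ (p + q) * D * T ^ (p + q - 2) := mul_nonneg hc3 (Real.rpow_nonneg hT0 _)
      simp only [hgdef]; linarith
    · obtain ⟨T, hT0, hTge⟩ := aux_exists4 (2 * q * C) _ (2 * A) (by nlinarith) he2
      refine ⟨T, hT0, ?_⟩
      have n1 : 0 ≤ 2 * p * B * T ^ (2 * p - 2) := mul_nonneg hc1 (Real.rpow_nonneg hT0 _)
      have n3 : 0 ≤ (p + q) * D * T ^ (p + q - 2) := mul_nonneg hc3 (Real.rpow_nonneg hT0 _)
      simp only [hgdef]; linarith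
    · obtain ⟨T, hT0, hTge⟩ := aux_exists4 ((p + q) * D) _ (2 * A) (by nlinarith) he3
      refine ⟨T, hT0, ?_⟩
      have n1 : 0 ≤ 2 * p * B * T ^ (2 * p - 2) := mul_nonneg hc1 (Real.rpow_nonneg hT0 _)
      have n2 : 0 ≤ 2 * q * C * T ^ (2 * q - 2) := mul_nonneg hc2 (Real.rpow_nonneg hT0 _)
      simp only [hgdef]; linarith
  obtain ⟨T, hT0, hTge⟩ := hT
  -- IVT
  have hmem : (2 * A) ∈ Icc (g 0) (g T) := by
    rw [hg0]; exact ⟨by linarith, hTge⟩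
  obtain ⟨t₀, ht₀mem, hgt₀⟩ := intermediate_value_Icc hT0 hgcont.continuousOn hmem
  have ht₀ne : t₀ ≠ 0 := by
    intro h
    rw [h, hg0] at hgt₀
    linarith
  have ht₀pos : 0 < t₀ := lt_of_le_of_ne ht₀mem.1 (Ne.symm ht₀ne)
  -- derivative formula
  have hderiv : ∀ t : ℝ, 0 < t → deriv f t = t * (2 * A - g t) := by
    intro t ht
    have ht' : t ≠ 0 := ne_of_gt ht
    have h1 : HasDerivAt (fun x : ℝ => A * x ^ 2) (A * (2 * t)) t := by
      simpa using (hasDerivAt_pow 2 t).const_mul A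
    have h2 : HasDerivAt (fun x : ℝ => B * x ^ (2 * p)) (B * (2 * p * t ^ (2 * p - 1))) t :=
      (Real.hasDerivAt_rpow_const (Or.inl ht')).const_mul B
    have h3 : HasDerivAt (fun x : ℝ => C * x ^ (2 * q)) (C * (2 * q * t ^ (2 * q - 1))) t :=
      (Real.hasDerivAt_rpow_const (Or.inl ht')).const_mul C
    have h4 : HasDerivAt (fun x : ℝ => D * x ^ (p + q)) (D * ((p + q) * t ^ (p + q - 1))) t :=
      (Real.hasDerivAt_rpow_const (Or.inl ht')).const_mul D
    have hd : HasDerivAt f (A * (2 * t) - B * (2 * p * t ^ (2 * p - 1))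
        - C * (2 * q * t ^ (2 * q - 1)) - D * ((p + q) * t ^ (p + q - 1))) t := by
      rw [hfdef]
      exact ((h1.sub h2).sub h3).sub h4
    rw [hd.deriv]
    have r1 : t ^ (2 * p - 1) = t ^ (2 * p - 2) * t := by
      rw [show (2 * p - 1) = (2 * p - 2) + 1 by ring, Real.rpow_add ht, Real.rpow_one]
    have r2 : t ^ (2 * q - 1) = t ^ (2 * q - 2) * t := by
      rw [show (2 * q - 1) = (2 * q - 2) + 1 by ring, Real.rpow_add ht, Real.rpow_one]
    have r3 : t ^ (p + q - 1) = t ^ (p + q - 2) * t := by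
      rw [show (p + q - 1) = (p + q - 2) + 1 by ring, Real.rpow_add ht, Real.rpow_one]
    rw [r1, r2, r3]
    simp only [hgdef]
    ring
  -- sign of derivative
  have dpos : ∀ t, 0 < t → t < t₀ → 0 < deriv f t := by
    intro t ht htlt
    rw [hderiv t ht]
    have hlt : g t < g t₀ := hgmono ht.le ht₀pos.le htlt
    rw [hgt₀] at hlt
    exact mul_pos ht (by linarith)
  have dneg : ∀ t, t₀ < t → deriv f t < 0 := by
    intro t htlt
    have ht : 0 < t := lt_trans ht₀pos htlt
    rw [hderiv t ht]
    have hlt : g t₀ < g t := hgmono ht₀pos.le ht.le htlt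
    rw [hgt₀] at hlt
    exact mul_neg_of_pos_of_neg ht (by linarith)
  have dzero : deriv f t₀ = 0 := by
    rw [hderiv t₀ ht₀pos, hgt₀]; ring
  have uniq : ∀ t, 0 < t → deriv f t = 0 → t = t₀ := by
    intro t ht h0
    rcases lt_trichotomy t t₀ with h | h | h
    · exact absurd h0 (ne_of_gt (dpos t ht h))
    · exact h
    · exact absurd h0 (ne_of_lt (dneg t h))
  have hfc : ∀ x : ℝ, x ≠ 0 → ContinuousAt f x := by
    intro x hx
    rw [hfdef]
    exact ((((continuous_pow 2).continuousAt.const_mul A).sub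
      ((Real.continuousAt_rpow_const x _ (Or.inl hx)).const_mul B)).sub
      ((Real.continuousAt_rpow_const x _ (Or.inl hx)).const_mul C)).sub
      ((Real.continuousAt_rpow_const x _ (Or.inl hx)).const_mul D)
  have hmono : StrictMonoOn f (Ioc 0 t₀) := by
    apply strictMonoOn_of_deriv_pos (convex_Ioc 0 t₀)
    · intro x hx
      exact (hfc x (ne_of_gt hx.1)).continuousWithinAt
    · intro x hx
      rw [interior_Ioc] at hx
      exact dpos x hx.1 hx.2
  have hanti : StrictAntiOn f (Ici t₀) := by
    apply strictAntiOn_of_deriv_neg (convex_Ici t₀)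
    · intro x hx
      exact (hfc x (ne_of_gt (lt_of_lt_of_le ht₀pos hx))).continuousWithinAt
    · intro x hx
      rw [interior_Ici] at hx
      exact dneg x hx
  refine ⟨t₀, ht₀pos, dzero, uniq, hmono, hanti, ?_⟩
  intro t ht
  rcases lt_trichotomy t t₀ with h | h | h
  · exact (hmono ⟨ht, h.le⟩ ⟨ht₀pos, le_refl _⟩ h).le
  · rw [h]
  · exact (hanti (self_mem_Ici) h.le h).le
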